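/- arXiv:1710.10991 — 6 statements merged into one kernel-verified Lean document; each statement's English description precedes it below -/
import Mathlib

section
/- For a terminating rewrite relation, the property UNR (unique normal forms with respect to reductions) implies confluence (the Church-Rosser property). -/
/-- For a terminating relation, UNR implies confluence (the Church-Rosser property). -/
theorem unr_implies_cr_of_terminating {A : Type*} (r : A → A → Prop)
    (term : WellFounded (fun a b => r b a))
    (unr : ∀ s t u, Relation.ReflTransGen r s t → Relation.ReflTransGen r s u →
      (∀ v, ¬ r t v) → (∀ v, ¬ r u v) → t = u) :
    ∀ s t, Relation.EqvGen r s t →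
      ∃ u, Relation.ReflTransGen r s u ∧ Relation.ReflTransGen r t u := by
  -- every element reduces to a normal form
  have nf : ∀ s : A, ∃ t, Relation.ReflTransGen r s t ∧ ∀ v, ¬ r t v := by
    intro s
    induction s using term.induction with
    | _ s ih =>
      by_cases h : ∃ v, r s v
      · obtain ⟨v, hv⟩ := h
        obtain ⟨t, ht, hn⟩ := ih v hv
        exact ⟨t, Relation.ReflTransGen.head hv ht, hn⟩
      · exact ⟨s, Relation.ReflTransGen.refl, fun v hv => h ⟨v, hv⟩⟩
  -- stronger statement: common reduct which is a normal form
  have key : ∀ s t, Relation.EqvGen r s t →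
      ∃ u, Relation.ReflTransGen r s u ∧ Relation.ReflTransGen r t u ∧ ∀ v, ¬ r u v := by
    intro s t h
    induction h with
    | rel s t hst =>
      obtain ⟨u, hu, hn⟩ := nf t
      exact ⟨u, Relation.ReflTransGen.head hst hu, hu, hn⟩
    | refl s =>
      obtain ⟨u, hu, hn⟩ := nf s
      exact ⟨u, hu, hu, hn⟩
    | symm s t _ ih =>
      obtain ⟨u, h1, h2, hn⟩ := ih
      exact ⟨u, h2, h1, hn⟩
    | trans s t w _ _ ih1 ih2 =>
      obtain ⟨u, h1, h2, hnu⟩ := ih1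
      obtain ⟨v, h3, h4, hnv⟩ := ih2
      have : u = v := unr t u v h2 h3 hnu hnv
      subst this
      exact ⟨u, h1, h4, hnu⟩
  intro s t h
  obtain ⟨u, h1, h2, _⟩ := key s t h
  exact ⟨u, h1, h2⟩
end

section
/- Flattening sandwich: for the flattening (R♭, E) of a curried ground TRS R°, one has (←!_{E⁻} · →_{R♭} · →!_{E⁻}) ⊆ →_{R°} ⊆ (→*_E · →_{R♭} · ←*_E), where →!_{E⁻} denotes reduction to E⁻-normal form. -/
/-- Curried terms: constants from `F` plus a single binary application symbol `∘`. -/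
inductive CTerm (F : Type) : Type
  | const : F → CTerm F
  | app : CTerm F → CTerm F → CTerm F

/-- Ground rewriting of curried terms: closure of the rules under contexts. -/
inductive CRew {F : Type} (R : Set (CTerm F × CTerm F)) : CTerm F → CTerm F → Prop
  | rule {l r} : (l, r) ∈ R → CRew R l r
  | appl {s t u} : CRew R s t → CRew R (.app s u) (.app t u)
  | appr {s t u} : CRew R s t → CRew R (.app u s) (.app u t)

/-- The (reflexive) subterm relation. -/
inductive Subt {F : Type} : CTerm F → CTerm F → Prop
  | refl (t) : Subt t t
  | appl {s t u} : Subt s t → Subt s (.app t u)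
  | appr {s t u} : Subt s t → Subt s (.app u t)

/-- `s` is a subterm of (a side of a rule of) the TRS `R`. -/
def SubR {F : Type} (R : Set (CTerm F × CTerm F)) (s : CTerm F) : Prop :=
  ∃ l r, (l, r) ∈ R ∧ (Subt s l ∨ Subt s r)

/-- Terms over the signature extended by a fresh constant `[s]` for every
curried term `s` (only those with `s` a subterm of `R°` are ever used). -/
abbrev XTerm (F : Type) : Type := CTerm (F ⊕ CTerm F)

/-- The inverse of a TRS. -/
def inv {α : Type} (S : Set (α × α)) : Set (α × α) := { p | (p.2, p.1) ∈ S }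

/-- The embedding of curried terms into the extended signature. -/
def emb {F : Type} : CTerm F → XTerm F
  | .const c => .const (Sum.inl c)
  | .app s t => .app (emb s) (emb t)

/-- The TRS `R°` over the extended signature. -/
def Remb {F : Type} (R : Set (CTerm F × CTerm F)) : Set (XTerm F × XTerm F) :=
  { p | ∃ l r, (l, r) ∈ R ∧ p = (emb l, emb r) }

/-- The flattening system `E`: rules `c → [c]` and `[s₁] ∘ [s₂] → [s₁ ∘ s₂]`
for subterms of `R°`. -/
def Eflat {F : Type} (R : Set (CTerm F × CTerm F)) : Set (XTerm F × XTerm F) :=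
  { p | (∃ c : F, SubR R (.const c) ∧
          p = (CTerm.const (Sum.inl c), CTerm.const (Sum.inr (CTerm.const c)))) ∨
        (∃ s₁ s₂ : CTerm F, SubR R (.app s₁ s₂) ∧
          p = (CTerm.app (CTerm.const (Sum.inr s₁)) (CTerm.const (Sum.inr s₂)),
               CTerm.const (Sum.inr (CTerm.app s₁ s₂)))) }

/-- The flattened TRS `R♭ = { [ℓ] → [r] : ℓ → r ∈ R° }`. -/
def Rflat {F : Type} (R : Set (CTerm F × CTerm F)) : Set (XTerm F × XTerm F) :=
  { p | ∃ l r, (l, r) ∈ R ∧ p = (CTerm.const (Sum.inr l), CTerm.const (Sum.inr r)) }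

/-- Reduction to normal form: `a →! b` w.r.t. the TRS `S`. -/
def ToNF {F : Type} (S : Set (XTerm F × XTerm F)) (a b : XTerm F) : Prop :=
  Relation.ReflTransGen (CRew S) a b ∧ ∀ c, ¬ CRew S b c

theorem subt_trans {F : Type} {a b c : CTerm F} (h1 : Subt a b) (h2 : Subt b c) :
    Subt a c := by
  induction h2 with
  | refl => exact h1
  | appl _ ih => exact Subt.appl ih
  | appr _ ih => exact Subt.appr ih

theorem subR_of_subt {F : Type} {R : Set (CTerm F × CTerm F)} {s s' : CTerm F}
    (h : SubR R s) (hs : Subt s' s) : SubR R s' := by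
  obtain ⟨l, r, hlr, h | h⟩ := h
  · exact ⟨l, r, hlr, Or.inl (subt_trans hs h)⟩
  · exact ⟨l, r, hlr, Or.inr (subt_trans hs h)⟩

theorem rtg_appl {F : Type} {S : Set (XTerm F × XTerm F)} {a b u : XTerm F}
    (h : Relation.ReflTransGen (CRew S) a b) :
    Relation.ReflTransGen (CRew S) (.app a u) (.app b u) :=
  Relation.ReflTransGen.lift (fun x => CTerm.app x u) (fun _ _ hh => CRew.appl hh) _ _ h

theorem rtg_appr {F : Type} {S : Set (XTerm F × XTerm F)} {a b u : XTerm F}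
    (h : Relation.ReflTransGen (CRew S) a b) :
    Relation.ReflTransGen (CRew S) (.app u a) (.app u b) :=
  Relation.ReflTransGen.lift (fun x => CTerm.app u x) (fun _ _ hh => CRew.appr hh) _ _ h

theorem emb_to_flat {F : Type} {R : Set (CTerm F × CTerm F)} {s : CTerm F}
    (h : SubR R s) :
    Relation.ReflTransGen (CRew (Eflat R)) (emb s) (.const (.inr s)) := by
  induction s with
  | const c =>
      exact Relation.ReflTransGen.single (CRew.rule (Or.inl ⟨c, h, rfl⟩))
  | app a b iha ihb =>
      have ha := iha (subR_of_subt h (Subt.appl (Subt.refl _)))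
      have hb := ihb (subR_of_subt h (Subt.appr (Subt.refl _)))
      exact ((rtg_appl ha).trans (rtg_appr hb)).trans
        (Relation.ReflTransGen.single (CRew.rule (Or.inr ⟨a, b, h, rfl⟩)))

/-- Unflattening relation: `D R u s` iff `s` is the E⁻-normal form of `u`. -/
inductive D {F : Type} (R : Set (CTerm F × CTerm F)) : XTerm F → XTerm F → Prop
  | cin (c : F) : D R (.const (.inl c)) (.const (.inl c))
  | sub {w} : SubR R w → D R (.const (.inr w)) (emb w)
  | nsub {w} : ¬ SubR R w → D R (.const (.inr w)) (.const (.inr w))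
  | app {a b a' b'} : D R a a' → D R b b' → D R (.app a b) (.app a' b')

theorem D_func {F : Type} {R : Set (CTerm F × CTerm F)} {u s t : XTerm F}
    (h1 : D R u s) (h2 : D R u t) : s = t := by
  induction h1 generalizing t with
  | cin c => cases h2; rfl
  | sub hw => cases h2 with
      | sub => rfl
      | nsub hn => exact absurd hw hn
  | nsub hw => cases h2 with
      | sub hs => exact absurd hs hw
      | nsub => rfl
  | app _ _ iha ihb =>
      cases h2 with
      | app ha hb => rw [iha ha, ihb hb]

theorem D_emb_parts {F : Type} {R : Set (CTerm F × CTerm F)} {w : CTerm F} {x : XTerm F}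
    (hw : SubR R w) (h : D R (.const (.inr w)) x) : x = emb w := by
  cases h with
  | sub => rfl
  | nsub hn => exact absurd hw hn

theorem D_back {F : Type} {R : Set (CTerm F × CTerm F)} {u u' s : XTerm F}
    (hstep : CRew (inv (Eflat R)) u u') (h : D R u' s) : D R u s := by
  induction hstep generalizing s with
  | rule hr =>
      rcases hr with ⟨c, hc, heq⟩ | ⟨s₁, s₂, hs, heq⟩
      · obtain ⟨h1, h2⟩ := Prod.mk.injEq .. ▸ heq
        -- heq : (u', u) = (const (inl c), const (inr (const c)))
        cases heq
        cases h
        exact D.sub hc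
      · cases heq
        cases h with
        | app h1 h2 =>
            have hs₁ : SubR R s₁ := subR_of_subt hs (Subt.appl (Subt.refl _))
            have hs₂ : SubR R s₂ := subR_of_subt hs (Subt.appr (Subt.refl _))
            rw [D_emb_parts hs₁ h1, D_emb_parts hs₂ h2]
            exact D.sub hs
  | appl _ ih =>
      cases h with
      | app h1 h2 => exact D.app (ih h1) h2
  | appr _ ih =>
      cases h with
      | app h1 h2 => exact D.app h1 (ih h2)

theorem D_nf {F : Type} {R : Set (CTerm F × CTerm F)} {s : XTerm F}
    (hnf : ∀ c, ¬ CRew (inv (Eflat R)) s c) : D R s s := by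
  induction s with
  | const x =>
      cases x with
      | inl c => exact D.cin c
      | inr w =>
          refine D.nsub fun hS => ?_
          cases w with
          | const c =>
              exact hnf _ (CRew.rule (show _ ∈ inv (Eflat R) from Or.inl ⟨c, hS, rfl⟩))
          | app a b =>
              exact hnf _ (CRew.rule (show _ ∈ inv (Eflat R) from Or.inr ⟨a, b, hS, rfl⟩))
  | app a b iha ihb =>
      exact D.app (iha fun c hc => hnf _ (CRew.appl hc))
        (ihb fun c hc => hnf _ (CRew.appr hc))

theorem ToNF_D {F : Type} {R : Set (CTerm F × CTerm F)} {u s : XTerm F}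
    (h : ToNF (inv (Eflat R)) u s) : D R u s := by
  obtain ⟨hrt, hnf⟩ := h
  induction hrt using Relation.ReflTransGen.head_induction_on with
  | refl => exact D_nf hnf
  | head hstep _ ih => exact D_back hstep ih

theorem main_left {F : Type} {R : Set (CTerm F × CTerm F)} {u v s t : XTerm F}
    (hr : CRew (Rflat R) u v) (hu : D R u s) (hv : D R v t) :
    CRew (Remb R) s t := by
  induction hr generalizing s t with
  | rule h =>
      obtain ⟨l, r, hlr, heq⟩ := h
      cases heq
      have hl : SubR R l := ⟨l, r, hlr, Or.inl (Subt.refl _)⟩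
      have hrr : SubR R r := ⟨l, r, hlr, Or.inr (Subt.refl _)⟩
      rw [D_emb_parts hl hu, D_emb_parts hrr hv]
      exact CRew.rule ⟨l, r, hlr, rfl⟩
  | appl _ ih =>
      cases hu with
      | app hu1 hu2 =>
        cases hv with
        | app hv1 hv2 =>
            rw [D_func hu2 hv2]
            exact CRew.appl (ih hu1 hv1)
  | appr _ ih =>
      cases hu with
      | app hu1 hu2 =>
        cases hv with
        | app hv1 hv2 =>
            rw [D_func hu1 hv1]
            exact CRew.appr (ih hu2 hv2)

/-- The flattening sandwich:
`(←!_{E⁻} · →_{R♭} · →!_{E⁻}) ⊆ →_{R°} ⊆ (→*_E · →_{R♭} · ←*_E)`. -/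
theorem flattening_sandwich {F : Type} (R : Set (CTerm F × CTerm F)) :
    (∀ s t : XTerm F,
      (∃ u v, ToNF (inv (Eflat R)) u s ∧ CRew (Rflat R) u v ∧ ToNF (inv (Eflat R)) v t) →
      CRew (Remb R) s t) ∧
    (∀ s t : XTerm F, CRew (Remb R) s t →
      ∃ u v, Relation.ReflTransGen (CRew (Eflat R)) s u ∧ CRew (Rflat R) u v ∧
        Relation.ReflTransGen (CRew (Eflat R)) t v) := by
  constructor
  · rintro s t ⟨u, v, h1, h2, h3⟩
    exact main_left h2 (ToNF_D h1) (ToNF_D h3)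
  · intro s t h
    induction h with
    | rule h =>
        obtain ⟨l, r, hlr, heq⟩ := h
        cases heq
        exact ⟨_, _, emb_to_flat ⟨l, r, hlr, Or.inl (Subt.refl _)⟩,
          CRew.rule ⟨l, r, hlr, rfl⟩, emb_to_flat ⟨l, r, hlr, Or.inr (Subt.refl _)⟩⟩
    | appl _ ih =>
        obtain ⟨u, v, h1, h2, h3⟩ := ih
        exact ⟨_, _, rtg_appl h1, CRew.appl h2, rtg_appl h3⟩
    | appr _ ih =>
        obtain ⟨u, v, h1, h2, h3⟩ := ih
        exact ⟨_, _, rtg_appr h1, CRew.appr h2, rtg_appr h3⟩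
end

section
/- For terms s, t over the extended signature with flattening constants, if s →_E t then (s)_R →_C (t)_R, where (·)_R replaces each flattening constant [u] by its congruence class [u]_R and C is the congruence-closure rewrite system. -/
/-- The `R°`-convertibility class of a curried term, as a predicate. -/
def classOf {F : Type} (R : Set (CTerm F × CTerm F)) (u : CTerm F) : CTerm F → Prop :=
  Relation.EqvGen (CRew R) u

/-- Terms over the signature extended by a fresh constant for every
convertibility class. -/
abbrev YTerm (F : Type) : Type := CTerm (F ⊕ (CTerm F → Prop))

/-- The map `(·)_R` replacing each flattening constant `[u]` by `[u]_R`,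
acting homomorphically on the other symbols. -/
def toClass {F : Type} (R : Set (CTerm F × CTerm F)) : XTerm F → YTerm F
  | .const (Sum.inl c) => .const (Sum.inl c)
  | .const (Sum.inr u) => .const (Sum.inr (classOf R u))
  | .app s t => .app (toClass R s) (toClass R t)

/-- The congruence-closure rewrite system
`C = { f([s₁]_R,…,[sₙ]_R) → [f(s₁,…,sₙ)]_R : f(s⃗) a subterm of R° }`. -/
def Ccl {F : Type} (R : Set (CTerm F × CTerm F)) : Set (YTerm F × YTerm F) :=
  { p | (∃ c : F, SubR R (.const c) ∧
          p = (CTerm.const (Sum.inl c), CTerm.const (Sum.inr (classOf R (.const c))))) ∨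
        (∃ s₁ s₂ : CTerm F, SubR R (.app s₁ s₂) ∧
          p = (CTerm.app (CTerm.const (Sum.inr (classOf R s₁)))
                 (CTerm.const (Sum.inr (classOf R s₂))),
               CTerm.const (Sum.inr (classOf R (.app s₁ s₂))))) }

/-- An `E`-step maps to a `C`-step under `(·)_R`. -/
theorem eflat_step_to_ccl {F : Type} (R : Set (CTerm F × CTerm F)) (s t : XTerm F) :
    CRew (Eflat R) s t → CRew (Ccl R) (toClass R s) (toClass R t) := by
  intro h
  induction h with
  | rule h =>
    rcases h with ⟨c, hc, hp⟩ | ⟨s₁, s₂, hs, hp⟩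
    · cases hp; exact CRew.rule (Or.inl ⟨c, hc, rfl⟩)
    · cases hp; exact CRew.rule (Or.inr ⟨s₁, s₂, hs, rfl⟩)
  | appl _ ih => exact CRew.appl ih
  | appr _ ih => exact CRew.appr ih
end

section
/- Rewrite-closure decomposition: with F = { p → q : p, q flattening constants and p →*_{R♭ ∪ E^±} q }, one has s →*_{E^± ∪ R♭} t if and only if s →*_{E ∪ F} · →*_{E⁻ ∪ F} t, i.e., every reduction factors into a decreasing phase (E and F steps) followed by an increasing phase (E⁻ and F steps). -/
/-- The rewrite closure
`F = { [p] → [q] : p, q subterms of R° and [p] →*_{R♭ ∪ E^±} [q] }`. -/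
def Fcl {F : Type} (R : Set (CTerm F × CTerm F)) : Set (XTerm F × XTerm F) :=
  { pr | ∃ a b : CTerm F, SubR R a ∧ SubR R b ∧
      Relation.ReflTransGen (CRew (Rflat R ∪ Eflat R ∪ inv (Eflat R)))
        (CTerm.const (Sum.inr a)) (CTerm.const (Sum.inr b)) ∧
      pr = (CTerm.const (Sum.inr a), CTerm.const (Sum.inr b)) }

namespace RCD

open Relation

variable {F : Type}

/-- `[a]` as an extended term. -/
abbrev kk (a : CTerm F) : XTerm F := CTerm.const (Sum.inr a)

theorem crew_mono {S T : Set (XTerm F × XTerm F)} (h : S ⊆ T) :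
    ∀ {s t : XTerm F}, CRew S s t → CRew T s t := by
  intro s t hst
  induction hst with
  | rule hm => exact CRew.rule (h hm)
  | appl _ ih => exact CRew.appl ih
  | appr _ ih => exact CRew.appr ih

theorem crew_union_elim {A B : Set (XTerm F × XTerm F)} {s t : XTerm F}
    (h : CRew (A ∪ B) s t) : CRew A s t ∨ CRew B s t := by
  induction h with
  | rule hm =>
    rcases hm with hm | hm
    · exact Or.inl (CRew.rule hm)
    · exact Or.inr (CRew.rule hm)
  | appl _ ih => exact ih.imp CRew.appl CRew.appl
  | appr _ ih => exact ih.imp CRew.appr CRew.appr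

theorem rtg_mono {S T : Set (XTerm F × XTerm F)} (h : S ⊆ T) {s t : XTerm F}
    (hst : ReflTransGen (CRew S) s t) : ReflTransGen (CRew T) s t :=
  by induction hst with
    | refl => exact .refl
    | tail _ hs ih => exact ih.tail (crew_mono h hs)

theorem rtg_appl {S : Set (XTerm F × XTerm F)} {a b c : XTerm F}
    (h : ReflTransGen (CRew S) a b) :
    ReflTransGen (CRew S) (.app a c) (.app b c) := by
  induction h with
  | refl => exact .refl
  | tail _ hs ih => exact ih.tail (CRew.appl hs)

theorem rtg_appr {S : Set (XTerm F × XTerm F)} {a b c : XTerm F}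
    (h : ReflTransGen (CRew S) a b) :
    ReflTransGen (CRew S) (.app c a) (.app c b) := by
  induction h with
  | refl => exact .refl
  | tail _ hs ih => exact ih.tail (CRew.appr hs)

theorem rtg_bind {r q : XTerm F → XTerm F → Prop}
    (h : ∀ a b, r a b → ReflTransGen q a b) {s t : XTerm F}
    (hst : ReflTransGen r s t) : ReflTransGen q s t := by
  induction hst with
  | refl => exact .refl
  | tail _ hs ih => exact ih.trans (h _ _ hs)

theorem subt_trans {a b c : CTerm F} (h1 : Subt a b) (h2 : Subt b c) : Subt a c := by
  induction h2 with
  | refl => exact h1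
  | appl _ ih => exact Subt.appl ih
  | appr _ ih => exact Subt.appr ih

theorem subr_of_subt {R : Set (CTerm F × CTerm F)} {a b : CTerm F}
    (h : Subt a b) (hb : SubR R b) : SubR R a := by
  obtain ⟨l, r, hm, hs⟩ := hb
  exact ⟨l, r, hm, hs.imp (subt_trans h) (subt_trans h)⟩

theorem subr_appl {R : Set (CTerm F × CTerm F)} {p q : CTerm F}
    (h : SubR R (.app p q)) : SubR R p :=
  subr_of_subt (Subt.appl (Subt.refl p)) h

theorem subr_appr {R : Set (CTerm F × CTerm F)} {p q : CTerm F}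
    (h : SubR R (.app p q)) : SubR R q :=
  subr_of_subt (Subt.appr (Subt.refl q)) h

/-- The union `R♭ ∪ E ∪ E⁻`. -/
abbrev Rall (R : Set (CTerm F × CTerm F)) : Set (XTerm F × XTerm F) :=
  Rflat R ∪ Eflat R ∪ inv (Eflat R)

/-- `F`-pairs, unbracketed form. -/
def Fp (R : Set (CTerm F × CTerm F)) (a b : CTerm F) : Prop :=
  SubR R a ∧ SubR R b ∧ ReflTransGen (CRew (Rall R)) (kk a) (kk b)

theorem fp_mem {R : Set (CTerm F × CTerm F)} {a b : CTerm F} (h : Fp R a b) :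
    (kk a, kk b) ∈ Fcl R :=
  ⟨a, b, h.1, h.2.1, h.2.2, rfl⟩

theorem fcl_elim {R : Set (CTerm F × CTerm F)} {x y : XTerm F}
    (h : (x, y) ∈ Fcl R) : ∃ a b, Fp R a b ∧ x = kk a ∧ y = kk b := by
  obtain ⟨a, b, h1, h2, h3, heq⟩ := h
  obtain ⟨e1, e2⟩ := Prod.ext_iff.mp heq
  exact ⟨a, b, ⟨h1, h2, h3⟩, e1, e2⟩

theorem feq_subr {R : Set (CTerm F × CTerm F)} {a b : CTerm F}
    (h : a = b ∨ Fp R a b) (ha : SubR R a) : SubR R b := by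
  rcases h with rfl | h
  · exact ha
  · exact h.2.1

theorem feq_rtg {R : Set (CTerm F × CTerm F)} {a b : CTerm F}
    (h : a = b ∨ Fp R a b) :
    ReflTransGen (CRew (Rall R)) (kk a) (kk b) := by
  rcases h with rfl | h
  · exact .refl
  · exact h.2.2

theorem feq_fp_trans {R : Set (CTerm F × CTerm F)} {a b c : CTerm F}
    (h : a = b ∨ Fp R a b) (h2 : Fp R b c) : Fp R a c := by
  rcases h with rfl | h
  · exact h2
  · exact ⟨h.1, h2.2.1, h.2.2.trans h2.2.2⟩

theorem fp_root {R : Set (CTerm F × CTerm F)} {p p₁ p₂ a b : CTerm F}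
    (hp : SubR R p) (hp12 : SubR R (.app p₁ p₂))
    (h0 : p = .app p₁ p₂ ∨ Fp R p (.app p₁ p₂))
    (h1 : p₁ = a ∨ Fp R p₁ a) (h2 : p₂ = b ∨ Fp R p₂ b)
    (hab : SubR R (.app a b)) : Fp R p (.app a b) := by
  refine ⟨hp, hab, ?_⟩
  have s1 : CRew (Rall R) (kk (CTerm.app p₁ p₂)) (.app (kk p₁) (kk p₂)) :=
    CRew.rule (Or.inr (show (_, _) ∈ Eflat R from Or.inr ⟨p₁, p₂, hp12, rfl⟩))
  have s2 : CRew (Rall R) (.app (kk a) (kk b)) (kk (CTerm.app a b)) :=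
    CRew.rule (Or.inl (Or.inr (Or.inr ⟨a, b, hab, rfl⟩)))
  exact (feq_rtg h0).trans (((ReflTransGen.single s1).trans
    ((rtg_appl (feq_rtg h1)).trans (rtg_appr (feq_rtg h2)))).trans
    (ReflTransGen.single s2))

/-- The "pending pattern" rules: either a pending `[c] → c` unflattening, or a
pending `[p] → [a] [b]` unflattening possibly followed by `F` activity. -/
def Pat (R : Set (CTerm F × CTerm F)) : Set (XTerm F × XTerm F) :=
  { pr | (∃ c : F, SubR R (.const c) ∧
            pr = (kk (CTerm.const c), CTerm.const (Sum.inl c))) ∨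
         (∃ p p₁ p₂ a b : CTerm F, SubR R p ∧ SubR R (.app p₁ p₂) ∧
            (p = .app p₁ p₂ ∨ Fp R p (.app p₁ p₂)) ∧
            (p₁ = a ∨ Fp R p₁ a) ∧ (p₂ = b ∨ Fp R p₂ b) ∧
            pr = (kk p, CTerm.app (kk a) (kk b))) }

theorem invE_sub_pat {R : Set (CTerm F × CTerm F)} : inv (Eflat R) ⊆ Pat R := by
  rintro ⟨x, y⟩ h
  rcases (h : (y, x) ∈ Eflat R) with ⟨c, hc, heq⟩ | ⟨s₁, s₂, hs, heq⟩
  · obtain ⟨e1, e2⟩ := Prod.ext_iff.mp heq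
    subst e1; subst e2
    exact Or.inl ⟨c, hc, rfl⟩
  · obtain ⟨e1, e2⟩ := Prod.ext_iff.mp heq
    subst e1; subst e2
    exact Or.inr ⟨.app s₁ s₂, s₁, s₂, s₁, s₂, hs, hs, Or.inl rfl, Or.inl rfl,
      Or.inl rfl, rfl⟩

theorem pat_not_inr {R : Set (CTerm F × CTerm F)} {s : XTerm F} {x : CTerm F}
    (h : CRew (Pat R) s (CTerm.const (Sum.inr x))) : False := by
  cases h with
  | rule hm =>
    rcases hm with ⟨c, _, heq⟩ | ⟨p, p₁, p₂, a, b, _, _, _, _, _, heq⟩ <;>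
      simp [Prod.ext_iff] at heq

theorem feq_stepQi {R : Set (CTerm F × CTerm F)} {a b : CTerm F}
    (h : a = b ∨ Fp R a b) :
    ReflTransGen (CRew (inv (Eflat R) ∪ Fcl R)) (kk a) (kk b) := by
  rcases h with rfl | h
  · exact .refl
  · exact ReflTransGen.single (CRew.rule (Or.inr (fp_mem h)))

theorem pat_resolve {R : Set (CTerm F × CTerm F)} {s u : XTerm F}
    (h : CRew (Pat R) s u) :
    ReflTransGen (CRew (inv (Eflat R) ∪ Fcl R)) s u := by
  induction h with
  | rule hm =>
    rcases hm with ⟨c, hc, heq⟩ | ⟨p, p₁, p₂, a, b, hp, hp12, h0, h1, h2, heq⟩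
    · obtain ⟨e1, e2⟩ := Prod.ext_iff.mp heq
      subst e1; subst e2
      exact ReflTransGen.single (CRew.rule (Or.inl
        (show (_, _) ∈ Eflat R from Or.inl ⟨c, hc, rfl⟩)))
    · obtain ⟨e1, e2⟩ := Prod.ext_iff.mp heq
      subst e1; subst e2
      have sE : CRew (inv (Eflat R) ∪ Fcl R) (kk (CTerm.app p₁ p₂))
          (.app (kk p₁) (kk p₂)) :=
        CRew.rule (Or.inl (show (_, _) ∈ Eflat R from Or.inr ⟨p₁, p₂, hp12, rfl⟩))
      exact (feq_stepQi h0).trans ((ReflTransGen.single sE).trans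
        ((rtg_appl (feq_stepQi h1)).trans (rtg_appr (feq_stepQi h2))))
  | appl _ ih => exact rtg_appl ih
  | appr _ ih => exact rtg_appr ih

theorem swap {R : Set (CTerm F × CTerm F)} {s u : XTerm F}
    (hp : CRew (Pat R) s u) :
    ∀ {v : XTerm F}, CRew (Eflat R ∪ Fcl R) u v →
      (∃ s', ReflTransGen (CRew (Eflat R ∪ Fcl R)) s s' ∧ CRew (Pat R) s' v) ∨
        ReflTransGen (CRew (Eflat R ∪ Fcl R)) s v := by
  induction hp with
  | rule hm =>
    intro v hq
    rcases hm with ⟨c, hc, heq⟩ | ⟨p, p₁, p₂, a, b, hp', hp12, h0, h1, h2, heq⟩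
    · obtain ⟨e1, e2⟩ := Prod.ext_iff.mp heq
      subst e1; subst e2
      cases hq with
      | rule hm2 =>
        rcases hm2 with (⟨c', _, heq2⟩ | ⟨s₁, s₂, _, heq2⟩) | hm2
        · obtain ⟨e1, e2⟩ := Prod.ext_iff.mp heq2
          injection e1 with e1
          injection e1 with e1
          subst e1; subst e2
          exact Or.inr .refl
        · obtain ⟨e1, _⟩ := Prod.ext_iff.mp heq2
          simp at e1
        · obtain ⟨a', b', _, e1, _⟩ := fcl_elim hm2
          simp at e1
    · obtain ⟨e1, e2⟩ := Prod.ext_iff.mp heq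
      subst e1; subst e2
      cases hq with
      | rule hm2 =>
        rcases hm2 with (⟨c', _, heq2⟩ | ⟨s₁, s₂, hs12, heq2⟩) | hm2
        · obtain ⟨e1, _⟩ := Prod.ext_iff.mp heq2
          simp at e1
        · obtain ⟨e1, e2⟩ := Prod.ext_iff.mp heq2
          simp only [CTerm.app.injEq, CTerm.const.injEq, Sum.inr.injEq] at e1
          obtain ⟨ea, eb⟩ := e1
          subst ea; subst eb; subst e2
          exact Or.inr (ReflTransGen.single (CRew.rule (Or.inr
            (fp_mem (fp_root hp' hp12 h0 h1 h2 hs12)))))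
        · obtain ⟨a', b', _, e1, _⟩ := fcl_elim hm2
          simp at e1
      | appl hq0 =>
        cases hq0 with
        | rule hm2 =>
          rcases hm2 with (⟨c', _, heq2⟩ | ⟨s₁, s₂, _, heq2⟩) | hm2
          · obtain ⟨e1, _⟩ := Prod.ext_iff.mp heq2
            simp at e1
          · obtain ⟨e1, _⟩ := Prod.ext_iff.mp heq2
            simp at e1
          · obtain ⟨a', b', hfp, e1, e2⟩ := fcl_elim hm2
            simp only [CTerm.const.injEq, Sum.inr.injEq] at e1
            subst e1; subst e2
            exact Or.inl ⟨_, .refl, CRew.rule (Or.inr ⟨p, p₁, p₂, b', b,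
              hp', hp12, h0, Or.inr (feq_fp_trans h1 hfp), h2, rfl⟩)⟩
      | appr hq0 =>
        cases hq0 with
        | rule hm2 =>
          rcases hm2 with (⟨c', _, heq2⟩ | ⟨s₁, s₂, _, heq2⟩) | hm2
          · obtain ⟨e1, _⟩ := Prod.ext_iff.mp heq2
            simp at e1
          · obtain ⟨e1, _⟩ := Prod.ext_iff.mp heq2
            simp at e1
          · obtain ⟨a', b', hfp, e1, e2⟩ := fcl_elim hm2
            simp only [CTerm.const.injEq, Sum.inr.injEq] at e1
            subst e1; subst e2
            exact Or.inl ⟨_, .refl, CRew.rule (Or.inr ⟨p, p₁, p₂, a, b',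
              hp', hp12, h0, h1, Or.inr (feq_fp_trans h2 hfp), rfl⟩)⟩
  | appl hp0 ih =>
    intro v hq
    cases hq with
    | rule hm2 =>
      rcases hm2 with (⟨c', _, heq2⟩ | ⟨s₁, s₂, _, heq2⟩) | hm2
      · obtain ⟨e1, _⟩ := Prod.ext_iff.mp heq2
        simp at e1
      · obtain ⟨e1, _⟩ := Prod.ext_iff.mp heq2
        simp only [CTerm.app.injEq] at e1
        exact absurd (e1.1 ▸ hp0) pat_not_inr
      · obtain ⟨a', b', _, e1, _⟩ := fcl_elim hm2
        simp at e1
    | appl hq0 =>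
      rcases ih hq0 with ⟨s', h1', h2'⟩ | h1'
      · exact Or.inl ⟨.app s' _, rtg_appl h1', CRew.appl h2'⟩
      · exact Or.inr (rtg_appl h1')
    | appr hq0 =>
      exact Or.inl ⟨.app _ _, ReflTransGen.single (CRew.appr hq0), CRew.appl hp0⟩
  | appr hp0 ih =>
    intro v hq
    cases hq with
    | rule hm2 =>
      rcases hm2 with (⟨c', _, heq2⟩ | ⟨s₁, s₂, _, heq2⟩) | hm2
      · obtain ⟨e1, _⟩ := Prod.ext_iff.mp heq2
        simp at e1
      · obtain ⟨e1, _⟩ := Prod.ext_iff.mp heq2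
        simp only [CTerm.app.injEq] at e1
        exact absurd (e1.2 ▸ hp0) pat_not_inr
      · obtain ⟨a', b', _, e1, _⟩ := fcl_elim hm2
        simp at e1
    | appl hq0 =>
      exact Or.inl ⟨.app _ _, ReflTransGen.single (CRew.appl hq0), CRew.appr hp0⟩
    | appr hq0 =>
      rcases ih hq0 with ⟨s', h1', h2'⟩ | h1'
      · exact Or.inl ⟨.app _ s', rtg_appr h1', CRew.appr h2'⟩
      · exact Or.inr (rtg_appr h1')

theorem push {R : Set (CTerm F × CTerm F)} {u v : XTerm F}
    (hq : ReflTransGen (CRew (Eflat R ∪ Fcl R)) u v) :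
    ∀ {s : XTerm F}, CRew (Pat R) s u →
      ∃ w, ReflTransGen (CRew (Eflat R ∪ Fcl R)) s w ∧
        ReflTransGen (CRew (inv (Eflat R) ∪ Fcl R)) w v := by
  induction hq using Relation.ReflTransGen.head_induction_on with
  | refl => exact fun hp => ⟨_, .refl, pat_resolve hp⟩
  | head hstep hrest ih =>
    intro s hp
    rcases swap hp hstep with ⟨s', h1, h2⟩ | h1
    · obtain ⟨w, hw1, hw2⟩ := ih h2
      exact ⟨w, h1.trans hw1, hw2⟩
    · exact ⟨v, h1.trans hrest, .refl⟩

theorem rflat_sub_fcl {R : Set (CTerm F × CTerm F)} : Rflat R ⊆ Fcl R := by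
  rintro ⟨x, y⟩ ⟨l, r, hm, heq⟩
  obtain ⟨e1, e2⟩ := Prod.ext_iff.mp heq
  subst e1; subst e2
  exact ⟨l, r, ⟨l, r, hm, Or.inl (Subt.refl l)⟩, ⟨l, r, hm, Or.inr (Subt.refl r)⟩,
    ReflTransGen.single (CRew.rule (Or.inl (Or.inl ⟨l, r, hm, rfl⟩))), rfl⟩

theorem rall_sub {R : Set (CTerm F × CTerm F)} :
    Rall R ⊆ Eflat R ∪ inv (Eflat R) ∪ Rflat R := by
  intro x hx
  rcases hx with (h | h) | h
  · exact Or.inr h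
  · exact Or.inl (Or.inl h)
  · exact Or.inl (Or.inr h)

theorem crew_fcl_sub {R : Set (CTerm F × CTerm F)} {s t : XTerm F}
    (h : CRew (Fcl R) s t) :
    ReflTransGen (CRew (Eflat R ∪ inv (Eflat R) ∪ Rflat R)) s t := by
  induction h with
  | rule hm =>
    obtain ⟨a, b, hfp, e1, e2⟩ := fcl_elim hm
    subst e1; subst e2
    exact rtg_mono rall_sub hfp.2.2
  | appl _ ih => exact rtg_appl ih
  | appr _ ih => exact rtg_appr ih

end RCD

/-- Rewrite-closure decomposition: every `E^± ∪ R♭` reduction factors into a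
decreasing phase (`E` and `F` steps) followed by an increasing phase
(`E⁻` and `F` steps), and vice versa. -/
theorem rewrite_closure_decomposition {F : Type} (R : Set (CTerm F × CTerm F))
    (s t : XTerm F) :
    Relation.ReflTransGen (CRew (Eflat R ∪ inv (Eflat R) ∪ Rflat R)) s t ↔
      ∃ u : XTerm F, Relation.ReflTransGen (CRew (Eflat R ∪ Fcl R)) s u ∧
        Relation.ReflTransGen (CRew (inv (Eflat R) ∪ Fcl R)) u t := by
  constructor
  · intro h
    induction h using Relation.ReflTransGen.head_induction_on with
    | refl => exact ⟨t, .refl, .refl⟩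
    | head hstep hrest ih =>
      obtain ⟨u, h1, h2⟩ := ih
      rcases RCD.crew_union_elim hstep with h' | h'
      · rcases RCD.crew_union_elim h' with hE | hI
        · exact ⟨u, h1.head (RCD.crew_mono Set.subset_union_left hE), h2⟩
        · obtain ⟨w, hw1, hw2⟩ := RCD.push h1 (RCD.crew_mono RCD.invE_sub_pat hI)
          exact ⟨w, hw1, hw2.trans h2⟩
      · exact ⟨u, h1.head (RCD.crew_mono
          (Set.Subset.trans RCD.rflat_sub_fcl Set.subset_union_right) h'), h2⟩
  · rintro ⟨u, h1, h2⟩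
    have b1 : Relation.ReflTransGen (CRew (Eflat R ∪ inv (Eflat R) ∪ Rflat R)) s u := by
      refine RCD.rtg_bind (fun a b hab => ?_) h1
      rcases RCD.crew_union_elim hab with h' | h'
      · exact Relation.ReflTransGen.single
          (RCD.crew_mono (Set.subset_union_left.trans Set.subset_union_left) h')
      · exact RCD.crew_fcl_sub h'
    have b2 : Relation.ReflTransGen (CRew (Eflat R ∪ inv (Eflat R) ∪ Rflat R)) u t := by
      refine RCD.rtg_bind (fun a b hab => ?_) h2
      rcases RCD.crew_union_elim hab with h' | h'
      · exact Relation.ReflTransGen.single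
          (RCD.crew_mono (Set.subset_union_right.trans Set.subset_union_left) h')
      · exact RCD.crew_fcl_sub h'
    exact b1.trans b2
end

section
/- The rewrite closure F coincides with the least relation ⇝ on flattening constants closed under: reflexivity; the base rules of R♭; transitivity; and congruence (if p₁∘p₂ → p ∈ E, p₁ ⇝ q₁, p₂ ⇝ q₂, and q₁∘q₂ → q ∈ E, then p ⇝ q). That is, p ⇝ q if and only if p →*_{E^± ∪ F} q for flattening constants p, q. -/
/-- The inductively defined relation `⇝` on flattening constants:
reflexivity, base rules of `R♭`, transitivity, and congruence via `E`-rules. -/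
inductive Leads {F : Type} (R : Set (CTerm F × CTerm F)) : CTerm F → CTerm F → Prop
  | refl {p} : SubR R p → Leads R p p
  | base {p q} : (p, q) ∈ R → Leads R p q
  | trans {p q r} : Leads R p q → Leads R q r → Leads R p r
  | cong {p₁ p₂ q₁ q₂} : SubR R (.app p₁ p₂) → Leads R p₁ q₁ → Leads R p₂ q₂ →
      SubR R (.app q₁ q₂) → Leads R (.app p₁ p₂) (.app q₁ q₂)

section Aux

variable {G : Type}

lemma subt_trans_s17 {s t u : CTerm G} (h1 : Subt s t) (h2 : Subt t u) : Subt s u := by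
  induction h2 with
  | refl => exact h1
  | appl _ ih => exact Subt.appl ih
  | appr _ ih => exact Subt.appr ih

lemma subR_appl {R : Set (CTerm G × CTerm G)} {u v : CTerm G}
    (h : SubR R (.app u v)) : SubR R u := by
  obtain ⟨l, r, hm, hs⟩ := h
  exact ⟨l, r, hm, hs.imp (subt_trans_s17 (Subt.appl (Subt.refl u)))
    (subt_trans_s17 (Subt.appl (Subt.refl u)))⟩

lemma subR_appr {R : Set (CTerm G × CTerm G)} {u v : CTerm G}
    (h : SubR R (.app u v)) : SubR R v := by
  obtain ⟨l, r, hm, hs⟩ := h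
  exact ⟨l, r, hm, hs.imp (subt_trans_s17 (Subt.appr (Subt.refl v)))
    (subt_trans_s17 (Subt.appr (Subt.refl v)))⟩

lemma rtg_appl_s17 {S : Set (CTerm G × CTerm G)} {s t u : CTerm G}
    (h : Relation.ReflTransGen (CRew S) s t) :
    Relation.ReflTransGen (CRew S) (.app s u) (.app t u) :=
  Relation.ReflTransGen.lift (fun x => CTerm.app x u) (fun _ _ h => CRew.appl h) _ _ h

lemma rtg_appr_s17 {S : Set (CTerm G × CTerm G)} {s t u : CTerm G}
    (h : Relation.ReflTransGen (CRew S) s t) :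
    Relation.ReflTransGen (CRew S) (.app u s) (.app u t) :=
  Relation.ReflTransGen.lift (fun x => CTerm.app u x) (fun _ _ h => CRew.appr h) _ _ h

/-- Derivations of a fixed length. -/
inductive Der (R : Set (CTerm G × CTerm G)) : ℕ → CTerm G → CTerm G → Prop
  | refl (t) : Der R 0 t t
  | tail {n s t u} : Der R n s t → CRew R t u → Der R (n + 1) s u

lemma rtg_der {R : Set (CTerm G × CTerm G)} {p q : CTerm G}
    (h : Relation.ReflTransGen (CRew R) p q) : ∃ n, Der R n p q := by
  induction h with
  | refl => exact ⟨0, Der.refl p⟩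
  | tail _ hstep ih => obtain ⟨n, hd⟩ := ih; exact ⟨n + 1, Der.tail hd hstep⟩

lemma der_decomp {R : Set (CTerm G × CTerm G)} {n : ℕ} {p q : CTerm G} (h : Der R n p q) :
    (p = q) ∨
    (∃ i j l r, (l, r) ∈ R ∧ Der R i p l ∧ Der R j r q ∧ i + 1 + j = n) ∨
    (∃ u₁ u₂ v₁ v₂ i j, p = CTerm.app u₁ u₂ ∧ q = CTerm.app v₁ v₂ ∧
      Der R i u₁ v₁ ∧ Der R j u₂ v₂ ∧ i + j ≤ n) := by
  induction h with
  | refl t => exact Or.inl rfl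
  | @tail n s t u hd hstep ih =>
    rcases ih with rfl | ⟨i, j, l, r, hm, h1, h2, hij⟩ |
        ⟨u₁, u₂, w₁, w₂, i, j, hpe, hte, h1, h2, hij⟩
    · cases hstep with
      | rule hm =>
        exact Or.inr (Or.inl ⟨n, 0, _, _, hm, hd, Der.refl _, by omega⟩)
      | @appl a b c hstep =>
        exact Or.inr (Or.inr ⟨a, c, b, c, 1, 0, rfl, rfl,
          Der.tail (Der.refl a) hstep, Der.refl c, by omega⟩)
      | @appr a b c hstep =>
        exact Or.inr (Or.inr ⟨c, a, c, b, 0, 1, rfl, rfl,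
          Der.refl c, Der.tail (Der.refl a) hstep, by omega⟩)
    · exact Or.inr (Or.inl ⟨i, j + 1, l, r, hm, h1, Der.tail h2 hstep, by omega⟩)
    · subst hte
      cases hstep with
      | rule hm =>
        exact Or.inr (Or.inl ⟨n, 0, _, _, hm, hd, Der.refl _, by omega⟩)
      | @appl a b c hstep =>
        exact Or.inr (Or.inr ⟨u₁, u₂, b, w₂, i + 1, j, hpe, rfl,
          Der.tail h1 hstep, h2, by omega⟩)
      | @appr a b c hstep =>
        exact Or.inr (Or.inr ⟨u₁, u₂, w₁, b, i, j + 1, hpe, rfl,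
          h1, Der.tail h2 hstep, by omega⟩)

/-- Core lemma: a plain `R`-derivation between subterms of `R` yields `Leads`. -/
lemma der_leads {R : Set (CTerm G × CTerm G)} :
    ∀ n : ℕ, ∀ p q : CTerm G, Der R n p q → SubR R p → SubR R q → Leads R p q := by
  intro n
  induction n using Nat.strong_induction_on with
  | _ n IHn =>
  intro p
  induction p with
  | const c =>
    intro q h hp hq
    rcases der_decomp h with rfl | ⟨i, j, l, r, hm, h1, h2, hij⟩ |
        ⟨u₁, u₂, v₁, v₂, i, j, hpe, _, _, _, _⟩
    · exact Leads.refl hp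
    · have hl : SubR R l := ⟨l, r, hm, Or.inl (Subt.refl l)⟩
      have hr : SubR R r := ⟨l, r, hm, Or.inr (Subt.refl r)⟩
      exact Leads.trans (Leads.trans (IHn i (by omega) _ _ h1 hp hl) (Leads.base hm))
        (IHn j (by omega) _ _ h2 hr hq)
    · exact absurd hpe (by simp)
  | app p₁ p₂ ih₁ ih₂ =>
    intro q h hp hq
    rcases der_decomp h with rfl | ⟨i, j, l, r, hm, h1, h2, hij⟩ |
        ⟨u₁, u₂, v₁, v₂, i, j, hpe, hqe, h1, h2, hij⟩
    · exact Leads.refl hp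
    · have hl : SubR R l := ⟨l, r, hm, Or.inl (Subt.refl l)⟩
      have hr : SubR R r := ⟨l, r, hm, Or.inr (Subt.refl r)⟩
      exact Leads.trans (Leads.trans (IHn i (by omega) _ _ h1 hp hl) (Leads.base hm))
        (IHn j (by omega) _ _ h2 hr hq)
    · obtain ⟨rfl, rfl⟩ : p₁ = u₁ ∧ p₂ = u₂ := by
        cases hpe; exact ⟨rfl, rfl⟩
      subst hqe
      have hp₁ := subR_appl hp
      have hp₂ := subR_appr hp
      have hq₁ := subR_appl hq
      have hq₂ := subR_appr hq
      have l1 : Leads R p₁ v₁ := by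
        rcases lt_or_eq_of_le (show i ≤ n by omega) with hlt | rfl
        · exact IHn i hlt _ _ h1 hp₁ hq₁
        · exact ih₁ _ h1 hp₁ hq₁
      have l2 : Leads R p₂ v₂ := by
        rcases lt_or_eq_of_le (show j ≤ n by omega) with hlt | rfl
        · exact IHn j hlt _ _ h2 hp₂ hq₂
        · exact ih₂ _ h2 hp₂ hq₂
      exact Leads.cong hp l1 l2 hq

end Aux

/-- Interpretation of extended terms back into curried terms. -/
def Uint {F : Type} : XTerm F → CTerm F
  | .const (.inl c) => .const c
  | .const (.inr s) => s
  | .app a b => .app (Uint a) (Uint b)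

lemma step_U {F : Type} {R : Set (CTerm F × CTerm F)} {t t' : XTerm F}
    (h : CRew (Rflat R ∪ Eflat R ∪ inv (Eflat R)) t t') :
    Relation.ReflTransGen (CRew R) (Uint t) (Uint t') := by
  induction h with
  | rule hm =>
    rcases hm with (hm | hm) | hm
    · obtain ⟨l, r, hlr, heq⟩ := hm
      obtain ⟨h1, h2⟩ := Prod.mk.inj heq
      subst h1; subst h2
      exact Relation.ReflTransGen.single (CRew.rule hlr)
    · rcases hm with ⟨c, _, heq⟩ | ⟨s₁, s₂, _, heq⟩ <;>
      · obtain ⟨h1, h2⟩ := Prod.mk.inj heq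
        subst h1; subst h2
        exact Relation.ReflTransGen.refl
    · rcases hm with ⟨c, _, heq⟩ | ⟨s₁, s₂, _, heq⟩ <;>
      · obtain ⟨h1, h2⟩ := Prod.mk.inj heq
        subst h1; subst h2
        exact Relation.ReflTransGen.refl
  | appl _ ih => exact rtg_appl_s17 ih
  | appr _ ih => exact rtg_appr_s17 ih

lemma rtg_U {F : Type} {R : Set (CTerm F × CTerm F)} {t t' : XTerm F}
    (h : Relation.ReflTransGen (CRew (Rflat R ∪ Eflat R ∪ inv (Eflat R))) t t') :
    Relation.ReflTransGen (CRew R) (Uint t) (Uint t') := by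
  induction h with
  | refl => exact Relation.ReflTransGen.refl
  | tail _ hstep ih => exact ih.trans (step_U hstep)

lemma step_elim {F : Type} {R : Set (CTerm F × CTerm F)} {t t' : XTerm F}
    (h : CRew (Eflat R ∪ inv (Eflat R) ∪ Fcl R) t t') :
    Relation.ReflTransGen (CRew (Rflat R ∪ Eflat R ∪ inv (Eflat R))) t t' := by
  induction h with
  | rule hm =>
    rcases hm with (hm | hm) | hm
    · exact Relation.ReflTransGen.single (CRew.rule (Or.inl (Or.inr hm)))
    · exact Relation.ReflTransGen.single (CRew.rule (Or.inr hm))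
    · obtain ⟨a, b, _, _, hder, heq⟩ := hm
      obtain ⟨h1, h2⟩ := Prod.mk.inj heq
      subst h1; subst h2
      exact hder
  | appl _ ih => exact rtg_appl_s17 ih
  | appr _ ih => exact rtg_appr_s17 ih

lemma rtg_elim {F : Type} {R : Set (CTerm F × CTerm F)} {t t' : XTerm F}
    (h : Relation.ReflTransGen (CRew (Eflat R ∪ inv (Eflat R) ∪ Fcl R)) t t') :
    Relation.ReflTransGen (CRew (Rflat R ∪ Eflat R ∪ inv (Eflat R))) t t' := by
  induction h with
  | refl => exact Relation.ReflTransGen.refl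
  | tail _ hstep ih => exact ih.trans (step_elim hstep)

lemma leads_chain {F : Type} {R : Set (CTerm F × CTerm F)} {p q : CTerm F}
    (h : Leads R p q) :
    SubR R p ∧ SubR R q ∧
      Relation.ReflTransGen (CRew (Rflat R ∪ Eflat R ∪ inv (Eflat R)))
        (CTerm.const (Sum.inr p)) (CTerm.const (Sum.inr q)) := by
  induction h with
  | refl hp => exact ⟨hp, hp, Relation.ReflTransGen.refl⟩
  | @base p q hm =>
    exact ⟨⟨p, q, hm, Or.inl (Subt.refl p)⟩, ⟨p, q, hm, Or.inr (Subt.refl q)⟩,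
      Relation.ReflTransGen.single (CRew.rule (Or.inl (Or.inl ⟨p, q, hm, rfl⟩)))⟩
  | trans _ _ ih1 ih2 => exact ⟨ih1.1, ih2.2.1, ih1.2.2.trans ih2.2.2⟩
  | @cong p₁ p₂ q₁ q₂ hp _ _ hq ih1 ih2 =>
    refine ⟨hp, hq, ?_⟩
    have s1 : CRew (Rflat R ∪ Eflat R ∪ inv (Eflat R))
        (CTerm.const (Sum.inr (CTerm.app p₁ p₂)))
        (CTerm.app (CTerm.const (Sum.inr p₁)) (CTerm.const (Sum.inr p₂))) :=
      CRew.rule (Or.inr (Or.inr ⟨p₁, p₂, hp, rfl⟩))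
    have s2 : CRew (Rflat R ∪ Eflat R ∪ inv (Eflat R))
        (CTerm.app (CTerm.const (Sum.inr q₁)) (CTerm.const (Sum.inr q₂)))
        (CTerm.const (Sum.inr (CTerm.app q₁ q₂))) :=
      CRew.rule (Or.inl (Or.inr (Or.inr ⟨q₁, q₂, hq, rfl⟩)))
    exact (Relation.ReflTransGen.single s1).trans
      (((rtg_appl_s17 ih1.2.2).trans (rtg_appr_s17 ih2.2.2)).trans
        (Relation.ReflTransGen.single s2))

/-- The rewrite closure coincides with `⇝`:
`p ⇝ q` iff `[p] →*_{E^± ∪ F} [q]` for flattening constants `[p]`, `[q]`. -/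
theorem leads_iff_rewrite_closure {F : Type} (R : Set (CTerm F × CTerm F))
    (p q : CTerm F) (hp : SubR R p) (hq : SubR R q) :
    Leads R p q ↔
      Relation.ReflTransGen (CRew (Eflat R ∪ inv (Eflat R) ∪ Fcl R))
        (CTerm.const (Sum.inr p)) (CTerm.const (Sum.inr q)) := by
  constructor
  · intro h
    obtain ⟨hp', hq', hder⟩ := leads_chain h
    exact Relation.ReflTransGen.single
      (CRew.rule (Or.inr ⟨p, q, hp', hq', hder, rfl⟩))
  · intro h
    have h1 := rtg_U (rtg_elim h)
    obtain ⟨n, hd⟩ := rtg_der h1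
    exact der_leads n p q hd hp hq
end

section
/- Meetable constants characterization: for flattening constants p, q, one has a peak p ←*_{E ∪ F} · →*_{E ∪ F} q if and only if p ↑ q, where ↑ is the least relation closed under reflexivity, congruence via E-rules, and closure under F-steps on either side. -/
/-- `p → q` is a rule of the rewrite closure `F` (on flattening constants). -/
def FRel {F : Type} (R : Set (CTerm F × CTerm F)) (p q : CTerm F) : Prop :=
  (CTerm.const (Sum.inr p), CTerm.const (Sum.inr q)) ∈ Fcl R

/-- The meetable-constants relation `↑`, defined inductively by reflexivity,
congruence via `E`-rules, and closure under `F`-steps on either side. -/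
inductive Meet {F : Type} (R : Set (CTerm F × CTerm F)) : CTerm F → CTerm F → Prop
  | refl {p} : SubR R p → Meet R p p
  | cong {p₁ p₂ q₁ q₂} : SubR R (.app p₁ p₂) → Meet R p₁ q₁ → Meet R p₂ q₂ →
      SubR R (.app q₁ q₂) → Meet R (.app p₁ p₂) (.app q₁ q₂)
  | step_l {p q r} : FRel R q p → Meet R q r → Meet R p r
  | step_r {p q r} : Meet R p q → FRel R q r → Meet R p r


namespace MeetAux

variable {F : Type} {R : Set (CTerm F × CTerm F)}

theorem subt_trans {s t u : CTerm F} (h1 : Subt s t) (h2 : Subt t u) : Subt s u := by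
  induction h2 with
  | refl => exact h1
  | appl _ ih => exact Subt.appl ih
  | appr _ ih => exact Subt.appr ih

theorem subR_of_subt {s t : CTerm F} (h : Subt s t) (ht : SubR R t) : SubR R s := by
  obtain ⟨l, r, hlr, hsub⟩ := ht
  exact ⟨l, r, hlr, hsub.imp (subt_trans h) (subt_trans h)⟩

theorem frel_sub {a b : CTerm F} (h : FRel R a b) : SubR R a ∧ SubR R b := by
  obtain ⟨a', b', ha, hb, _, heq⟩ := h
  simp only [Prod.mk.injEq, CTerm.const.injEq, Sum.inr.injEq] at heq
  obtain ⟨rfl, rfl⟩ := heq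
  exact ⟨ha, hb⟩

theorem m1 {a r p : CTerm F} (h : Meet R a r)
    (hc : Relation.ReflTransGen (FRel R) a p) : Meet R p r := by
  induction hc with
  | refl => exact h
  | tail _ hbc ih => exact Meet.step_l hbc ih

theorem m2 {a r q : CTerm F} (h : Meet R r a)
    (hc : Relation.ReflTransGen (FRel R) a q) : Meet R r q := by
  induction hc with
  | refl => exact h
  | tail _ hbc ih => exact Meet.step_r ih hbc

theorem chainMeet {a p q : CTerm F} (hp : SubR R p) (hq : SubR R q)
    (h1 : Relation.ReflTransGen (FRel R) a p)
    (h2 : Relation.ReflTransGen (FRel R) a q) : Meet R p q := by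
  have ha : SubR R a := by
    rcases h1.cases_head with rfl | ⟨b, hab, -⟩
    · exact hp
    · exact (frel_sub hab).1
  exact m1 (m2 (Meet.refl ha) h2) h1

inductive Reach (R : Set (CTerm F × CTerm F)) : XTerm F → CTerm F → Prop
  | base {a p} : Relation.ReflTransGen (FRel R) a p →
      Reach R (.const (Sum.inr a)) p
  | lift {c : F} {p} : SubR R (.const c) →
      Relation.ReflTransGen (FRel R) (.const c) p →
      Reach R (.const (Sum.inl c)) p
  | app {t₁ t₂ s₁ s₂ p} : Reach R t₁ s₁ → Reach R t₂ s₂ →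
      SubR R (.app s₁ s₂) →
      Relation.ReflTransGen (FRel R) (.app s₁ s₂) p →
      Reach R (.app t₁ t₂) p

theorem reach_step {t t' : XTerm F} (h : CRew (Eflat R ∪ Fcl R) t t') :
    ∀ {p : CTerm F}, Reach R t' p → Reach R t p := by
  induction h with
  | rule hr =>
    intro p hp
    rcases hr with (⟨c, hc, heq⟩ | ⟨s₁, s₂, hs, heq⟩) | hf
    · simp only [Prod.mk.injEq] at heq
      obtain ⟨rfl, rfl⟩ := heq
      cases hp with
      | base hch => exact Reach.lift hc hch
    · simp only [Prod.mk.injEq] at heq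
      obtain ⟨rfl, rfl⟩ := heq
      cases hp with
      | base hch =>
        exact Reach.app (Reach.base .refl) (Reach.base .refl) hs hch
    · obtain ⟨a, b, ha, hb, hrew, heq⟩ := hf
      simp only [Prod.mk.injEq] at heq
      obtain ⟨rfl, rfl⟩ := heq
      cases hp with
      | base hch =>
        exact Reach.base (Relation.ReflTransGen.head
          ⟨a, b, ha, hb, hrew, rfl⟩ hch)
  | appl _ ih =>
    intro p hp
    cases hp with
    | app h1 h2 hs hc => exact Reach.app (ih h1) h2 hs hc
  | appr _ ih =>
    intro p hp
    cases hp with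
    | app h1 h2 hs hc => exact Reach.app h1 (ih h2) hs hc

theorem reach_of_rtg {t : XTerm F} {p : CTerm F}
    (h : Relation.ReflTransGen (CRew (Eflat R ∪ Fcl R)) t
      (CTerm.const (Sum.inr p))) : Reach R t p := by
  induction h using Relation.ReflTransGen.head_induction_on with
  | refl => exact Reach.base .refl
  | head hstep _ ih => exact reach_step hstep ih

theorem meet_of_reach {t : XTerm F} {p : CTerm F} (h1 : Reach R t p) :
    ∀ {q : CTerm F}, Reach R t q → SubR R p → SubR R q → Meet R p q := by
  induction h1 with
  | base hc1 =>
    intro q h2 hp hq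
    cases h2 with
    | base hc2 => exact chainMeet hp hq hc1 hc2
  | lift hc hch1 =>
    intro q h2 hp hq
    cases h2 with
    | lift _ hch2 => exact chainMeet hp hq hch1 hch2
  | app r1 r2 hs hc ih1 ih2 =>
    intro q h2 hp hq
    cases h2 with
    | app r1' r2' hs' hc' =>
      exact m1 (m2 (Meet.cong hs
        (ih1 r1' (subR_of_subt (Subt.appl (Subt.refl _)) hs)
                 (subR_of_subt (Subt.appl (Subt.refl _)) hs'))
        (ih2 r2' (subR_of_subt (Subt.appr (Subt.refl _)) hs)
                 (subR_of_subt (Subt.appr (Subt.refl _)) hs'))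
        hs') hc') hc

theorem rtg_appl {S : Set (XTerm F × XTerm F)} {s t u : XTerm F}
    (h : Relation.ReflTransGen (CRew S) s t) :
    Relation.ReflTransGen (CRew S) (.app s u) (.app t u) := by
  induction h with
  | refl => exact .refl
  | tail _ hbc ih => exact ih.tail (CRew.appl hbc)

theorem rtg_appr {S : Set (XTerm F × XTerm F)} {s t u : XTerm F}
    (h : Relation.ReflTransGen (CRew S) s t) :
    Relation.ReflTransGen (CRew S) (.app u s) (.app u t) := by
  induction h with
  | refl => exact .refl
  | tail _ hbc ih => exact ih.tail (CRew.appr hbc)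

theorem peak_of_meet {p q : CTerm F} (h : Meet R p q) :
    ∃ u : XTerm F,
      Relation.ReflTransGen (CRew (Eflat R ∪ Fcl R)) u (CTerm.const (Sum.inr p)) ∧
      Relation.ReflTransGen (CRew (Eflat R ∪ Fcl R)) u (CTerm.const (Sum.inr q)) := by
  induction h with
  | refl _ => exact ⟨_, .refl, .refl⟩
  | cong hsp _ _ hsq ih1 ih2 =>
    obtain ⟨u1, h1p, h1q⟩ := ih1
    obtain ⟨u2, h2p, h2q⟩ := ih2
    refine ⟨.app u1 u2, ?_, ?_⟩
    · exact ((rtg_appl h1p).trans (rtg_appr h2p)).tail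
        (CRew.rule (Or.inl (Or.inr ⟨_, _, hsp, rfl⟩)))
    · exact ((rtg_appl h1q).trans (rtg_appr h2q)).tail
        (CRew.rule (Or.inl (Or.inr ⟨_, _, hsq, rfl⟩)))
  | step_l hf _ ih =>
    obtain ⟨u, h1, h2⟩ := ih
    exact ⟨u, h1.tail (CRew.rule (Or.inr hf)), h2⟩
  | step_r _ hf ih =>
    obtain ⟨u, h1, h2⟩ := ih
    exact ⟨u, h1, h2.tail (CRew.rule (Or.inr hf))⟩

end MeetAux

/-- Meetable constants characterization: `[p] ←*_{E ∪ F} · →*_{E ∪ F} [q]`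
iff `p ↑ q`. -/
theorem meetable_characterization {F : Type} (R : Set (CTerm F × CTerm F))
    (p q : CTerm F) (hp : SubR R p) (hq : SubR R q) :
    (∃ u : XTerm F, Relation.ReflTransGen (CRew (Eflat R ∪ Fcl R)) u (CTerm.const (Sum.inr p)) ∧
      Relation.ReflTransGen (CRew (Eflat R ∪ Fcl R)) u (CTerm.const (Sum.inr q))) ↔
      Meet R p q := by
  constructor
  · rintro ⟨u, h1, h2⟩
    exact MeetAux.meet_of_reach (MeetAux.reach_of_rtg h1)
      (MeetAux.reach_of_rtg h2) hp hq
  · exact MeetAux.peak_of_meet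
end
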